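/- arXiv:2301.11657 — 6 statements merged into one kernel-verified Lean document; each statement's English description precedes it below -/
import Mathlib

section
/- Let N be even, let σ ∈ {−1,+1}^N satisfy Σ_i σ_i = 0, let W be a symmetric real N×N matrix with zero diagonal, and let s ∈ {−1,+1}. Suppose there exist a diagonal matrix D ∈ ℝ^{N×N} and ν ∈ ℝ such that the matrix S := D + ν·11ᵀ − sW is positive semidefinite, its second smallest eigenvalue λ_{N−1}(S) is strictly positive, and Sσ = 0. Then X* = σσᵀ is the unique optimal solution of the semidefinite program: maximize Σ_{i<j} s·W_{ij}·X_{ij} over symmetric positive semidefinite N×N matrices X with X_{ii} = 1 for all i and Σ_{i,j} X_{ij} = 0; that is, every feasible X satisfies Σ_{i<j} s·W_{ij}·X_{ij} ≤ Σ_{i<j} s·W_{ij}·σ_iσ_j, with equality if and only if X = σσᵀ. -/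
/-!
Weak duality with complementary slackness. For a feasible `X`, the constraints `X i i = 1` and
`∑ i j, X i j = 0` turn twice the objective into `tr D - tr (S X)`, and `σσᵀ` is feasible with
`tr (S σσᵀ) = σᵀ S σ = 0`. As `S` and `X` are positive semidefinite, `tr (S X) ≥ 0`, with
equality only if `S X = 0`. Then every column of `X` lies in `ker S`, which the positivity of `S`
on `σ^⊥` reduces to the line through `σ`; the unit diagonal of `X` fixes the multiples, so
`X = σσᵀ`.
-/

open Matrix Finset

theorem Finset.sum_sum_eq_two_nsmul_sum_lt {ι M : Type*} [Fintype ι] [LinearOrder ι]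
    [AddCommMonoid M] (f : ι → ι → M) (hsymm : ∀ i j, f i j = f j i) (hdiag : ∀ i, f i i = 0) :
    ∑ i, ∑ j, f i j = 2 • ∑ p ∈ univ.filter (fun p : ι × ι => p.1 < p.2), f p.1 p.2 := by
  have hswap : ∑ p ∈ univ.filter (fun p : ι × ι => p.2 < p.1), f p.1 p.2
      = ∑ p ∈ univ.filter (fun p : ι × ι => p.1 < p.2), f p.1 p.2 :=
    sum_equiv (Equiv.prodComm ι ι) (by simp) fun p _ => hsymm _ _
  have hge : ∑ p ∈ univ.filter (fun p : ι × ι => ¬ p.1 < p.2), f p.1 p.2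
      = ∑ p ∈ univ.filter (fun p : ι × ι => p.2 < p.1), f p.1 p.2 := by
    refine (sum_subset (fun p => by simpa using le_of_lt) fun p hp hlt => ?_).symm
    simp only [mem_filter, mem_univ, true_and, not_lt] at hp hlt
    rw [le_antisymm hlt hp, hdiag]
  rw [← Fintype.sum_prod_type', ← sum_filter_add_sum_filter_not univ (fun p : ι × ι => p.1 < p.2),
    hge, hswap, two_nsmul]

section TraceMul
open scoped ComplexOrder MatrixOrder
variable {n 𝕜 : Type*} [Fintype n] [RCLike 𝕜] {A B : Matrix n n 𝕜}

/- Writing `B = Cᴴ C`, the trace `tr (A B) = tr (C A Cᴴ)` is that of a positive semidefinite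
matrix. -/
theorem Matrix.PosSemidef.trace_mul_nonneg (hA : A.PosSemidef) (hB : B.PosSemidef) :
    0 ≤ (A * B).trace := by
  classical
  obtain ⟨C, rfl⟩ := CStarAlgebra.nonneg_iff_eq_star_mul_self.mp hB.nonneg
  rw [← Matrix.mul_assoc, trace_mul_comm, ← Matrix.mul_assoc, star_eq_conjTranspose]
  exact (hA.mul_mul_conjTranspose_same C).trace_nonneg

theorem Matrix.PosSemidef.trace_mul_eq_zero_iff (hA : A.PosSemidef) (hB : B.PosSemidef) :
    (A * B).trace = 0 ↔ A * B = 0 := by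
  classical
  refine ⟨fun h => ?_, fun h => by rw [h, trace_zero]⟩
  obtain ⟨C, rfl⟩ := CStarAlgebra.nonneg_iff_eq_star_mul_self.mp hB.nonneg
  rw [star_eq_conjTranspose] at h ⊢
  rw [← Matrix.mul_assoc, trace_mul_comm, ← Matrix.mul_assoc,
    (hA.mul_mul_conjTranspose_same C).trace_eq_zero_iff] at h
  have hAC : A * Cᴴ = 0 := by
    refine ext_iff_mulVec.mpr fun v => ?_
    rw [← mulVec_mulVec, zero_mulVec, ← hA.dotProduct_mulVec_zero_iff, star_mulVec,
      ← dotProduct_mulVec, mulVec_mulVec, mulVec_mulVec,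
      conjTranspose_conjTranspose, h, zero_mulVec, dotProduct_zero]
  rw [← Matrix.mul_assoc, hAC, Matrix.zero_mul]

end TraceMul

section Kernel
variable {n R : Type*} [Fintype n] [Field R] [LinearOrder R] [IsStrictOrderedRing R]
  {S X : Matrix n n R} {v : n → R}

theorem Matrix.exists_eq_smul_of_mulVec_eq_zero (hSv : S *ᵥ v = 0)
    (hpos : ∀ y, y ⬝ᵥ v = 0 → y ≠ 0 → 0 < y ⬝ᵥ S *ᵥ y) {x : n → R} (hx : S *ᵥ x = 0) :
    ∃ c : R, x = c • v := by
  set c := (x ⬝ᵥ v) / (v ⬝ᵥ v)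
  have horth : (x - c • v) ⬝ᵥ v = 0 := by
    rw [sub_dotProduct, smul_dotProduct, smul_eq_mul, div_mul_cancel_of_imp, sub_self]
    intro hvv
    rw [dotProduct_self_eq_zero.mp hvv, dotProduct_zero]
  have hker : S *ᵥ (x - c • v) = 0 := by
    rw [mulVec_sub, mulVec_smul, hx, hSv, smul_zero, sub_zero]
  refine ⟨c, sub_eq_zero.mp (by_contra fun hne => ?_)⟩
  simpa [hker] using hpos _ horth hne

theorem Matrix.eq_vecMulVec_of_mul_eq_zero (hv : ∀ i, v i * v i = 1) (hSv : S *ᵥ v = 0)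
    (hpos : ∀ y, y ⬝ᵥ v = 0 → y ≠ 0 → 0 < y ⬝ᵥ S *ᵥ y) (hX : ∀ i, X i i = 1) (hSX : S * X = 0) :
    X = vecMulVec v v := by
  classical
  ext i j
  obtain ⟨c, hc⟩ := exists_eq_smul_of_mulVec_eq_zero hSv hpos
    (x := X *ᵥ Pi.single j 1) (by rw [mulVec_mulVec, hSX, zero_mulVec])
  simp only [mulVec_single_one, funext_iff, col_apply, Pi.smul_apply, smul_eq_mul] at hc
  have hcj : c = v j := by
    calc c = c * v j * v j := by rw [mul_assoc, hv, mul_one]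
      _ = v j := by rw [← hc, hX, one_mul]
  rw [hc, hcj, vecMulVec_apply, mul_comm]

end Kernel

section Duality
variable {n R : Type*} [Fintype n] [CommRing R] {W D S Y : Matrix n n R}

theorem Matrix.two_mul_sum_lt_mul_eq_trace_mul [LinearOrder n] (hW : W.IsSymm)
    (hWdiag : ∀ i, W i i = 0) (hY : Y.IsSymm) :
    2 * ∑ p ∈ univ.filter (fun p : n × n => p.1 < p.2), W p.1 p.2 * Y p.1 p.2 = (W * Y).trace := by
  rw [two_mul, ← two_nsmul, ← sum_sum_eq_two_nsmul_sum_lt (fun i j => W i j * Y i j)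
    (fun i j => by rw [hW.apply, hY.apply]) (fun i => by rw [hWdiag, zero_mul])]
  simp only [trace, diag_apply, mul_apply, hY.apply]

theorem Matrix.trace_mul_eq_trace_of_isDiag (hD : D.IsDiag) (hY : ∀ i, Y i i = 1) :
    (D * Y).trace = D.trace := by
  classical
  rw [← hD.diagonal_diag]
  simp [trace, hY]

theorem Matrix.trace_ones_mul (Y : Matrix n n R) :
    ((of fun _ _ => (1 : R)) * Y).trace = ∑ i, ∑ j, Y i j := by
  simp [trace, mul_apply, sum_comm (γ := n)]

theorem Matrix.two_mul_sum_lt_eq_trace_sub_trace_mul [LinearOrder n] {s ν : R}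
    (hW : W.IsSymm) (hWdiag : ∀ i, W i i = 0) (hD : D.IsDiag)
    (hS : S = D + ν • (of fun _ _ => (1 : R)) - s • W)
    (hY : Y.IsSymm) (hYdiag : ∀ i, Y i i = 1) (hYsum : ∑ i, ∑ j, Y i j = 0) :
    2 * ∑ p ∈ univ.filter (fun p : n × n => p.1 < p.2), s * W p.1 p.2 * Y p.1 p.2
      = D.trace - (S * Y).trace := by
  have hsW : s • W = D + ν • (of fun _ _ => (1 : R)) - S := by rw [hS, sub_sub_cancel]
  calc _ = (s • W * Y).trace :=
        two_mul_sum_lt_mul_eq_trace_mul (hW.smul s) (by simp [hWdiag]) hY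
    _ = D.trace - (S * Y).trace := by
      rw [hsW, sub_mul, add_mul, trace_sub, trace_add, smul_mul, trace_smul, trace_ones_mul,
        hYsum, smul_zero, add_zero, trace_mul_eq_trace_of_isDiag hD hYdiag]

end Duality

theorem sdp_dual_certificate_general
    (N : ℕ)
    (σ : Fin N → ℝ) (hσ : ∀ i, σ i = 1 ∨ σ i = -1) (hbal : ∑ i, σ i = 0)
    (W : Matrix (Fin N) (Fin N) ℝ) (hWsymm : W.IsSymm) (hWdiag : ∀ i, W i i = 0)
    (s : ℝ)
    (D : Matrix (Fin N) (Fin N) ℝ) (hDdiag : ∀ i j, i ≠ j → D i j = 0)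
    (ν : ℝ)
    (S : Matrix (Fin N) (Fin N) ℝ)
    (hSdef : S = D + ν • (Matrix.of fun _ _ => (1 : ℝ)) - s • W)
    (hSpsd : S.PosSemidef)
    (hSpos : ∀ x : Fin N → ℝ, x ⬝ᵥ σ = 0 → x ≠ 0 → 0 < x ⬝ᵥ S.mulVec x)
    (hSσ : S.mulVec σ = 0) :
    ∀ X : Matrix (Fin N) (Fin N) ℝ, X.PosSemidef → (∀ i, X i i = 1) →
      (∑ i, ∑ j, X i j = 0) →
      ((∑ p ∈ Finset.univ.filter (fun p : Fin N × Fin N => p.1 < p.2),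
          s * W p.1 p.2 * X p.1 p.2)
        ≤ ∑ p ∈ Finset.univ.filter (fun p : Fin N × Fin N => p.1 < p.2),
            s * W p.1 p.2 * (σ p.1 * σ p.2))
      ∧ ((∑ p ∈ Finset.univ.filter (fun p : Fin N × Fin N => p.1 < p.2),
            s * W p.1 p.2 * X p.1 p.2)
          = (∑ p ∈ Finset.univ.filter (fun p : Fin N × Fin N => p.1 < p.2),
              s * W p.1 p.2 * (σ p.1 * σ p.2))
        ↔ X = vecMulVec σ σ) := by
  intro X hX hXdiag hXsum
  have hσσ : ∀ i, σ i * σ i = 1 := fun i => by rcases hσ i with h | h <;> simp [h]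
  have hXval := two_mul_sum_lt_eq_trace_sub_trace_mul hWsymm hWdiag hDdiag hSdef
    (isHermitian_iff_isSymm.mp hX.isHermitian) hXdiag hXsum
  have hσval : 2 * ∑ p ∈ Finset.univ.filter (fun p : Fin N × Fin N => p.1 < p.2),
      s * W p.1 p.2 * (σ p.1 * σ p.2) = D.trace := by
    have h := two_mul_sum_lt_eq_trace_sub_trace_mul (Y := vecMulVec σ σ) hWsymm hWdiag hDdiag
      hSdef (IsSymm.ext fun i j => mul_comm (σ j) (σ i)) hσσ
      (by simp [vecMulVec_apply, ← sum_mul_sum, hbal])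
    rwa [mul_vecMulVec, hSσ, zero_vecMulVec, trace_zero, sub_zero] at h
  have hgap := hSpsd.trace_mul_nonneg hX
  refine ⟨by linarith, fun heq => ?_, fun h => by subst h; rfl⟩
  exact eq_vecMulVec_of_mul_eq_zero hσσ hSσ hSpos hXdiag
    ((hSpsd.trace_mul_eq_zero_iff hX).mp (by linarith))

/-- If there exist a diagonal matrix `D` and `ν ∈ ℝ` such that
`S = D + ν·11ᵀ − s·W` is positive semidefinite with `Sσ = 0` and strictly positive
second smallest eigenvalue (equivalently, given PSD and `Sσ = 0`: the quadratic form
is strictly positive on nonzero vectors orthogonal to `σ`), then `σσᵀ` is the unique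
optimal solution of the SDP. -/
theorem sdp_dual_certificate
    (N : ℕ) (hN : Even N)
    (σ : Fin N → ℝ) (hσ : ∀ i, σ i = 1 ∨ σ i = -1) (hbal : ∑ i, σ i = 0)
    (W : Matrix (Fin N) (Fin N) ℝ) (hWsymm : W.IsSymm) (hWdiag : ∀ i, W i i = 0)
    (s : ℝ) (hs : s = 1 ∨ s = -1)
    (D : Matrix (Fin N) (Fin N) ℝ) (hDdiag : ∀ i j, i ≠ j → D i j = 0)
    (ν : ℝ)
    (S : Matrix (Fin N) (Fin N) ℝ)
    (hSdef : S = D + ν • (Matrix.of fun _ _ => (1 : ℝ)) - s • W)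
    (hSpsd : S.PosSemidef)
    (hSpos : ∀ x : Fin N → ℝ, x ⬝ᵥ σ = 0 → x ≠ 0 → 0 < x ⬝ᵥ S.mulVec x)
    (hSσ : S.mulVec σ = 0) :
    ∀ X : Matrix (Fin N) (Fin N) ℝ, X.PosSemidef → (∀ i, X i i = 1) →
      (∑ i, ∑ j, X i j = 0) →
      ((∑ p ∈ Finset.univ.filter (fun p : Fin N × Fin N => p.1 < p.2),
          s * W p.1 p.2 * X p.1 p.2)
        ≤ ∑ p ∈ Finset.univ.filter (fun p : Fin N × Fin N => p.1 < p.2),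
            s * W p.1 p.2 * (σ p.1 * σ p.2))
      ∧ ((∑ p ∈ Finset.univ.filter (fun p : Fin N × Fin N => p.1 < p.2),
            s * W p.1 p.2 * X p.1 p.2)
          = (∑ p ∈ Finset.univ.filter (fun p : Fin N × Fin N => p.1 < p.2),
              s * W p.1 p.2 * (σ p.1 * σ p.2))
        ↔ X = vecMulVec σ σ) :=
  sdp_dual_certificate_general N σ hσ hbal W hWsymm hWdiag s D hDdiag ν S hSdef hSpsd hSpos hSσ
end

section
/- Let N be even, let σ ∈ {−1,+1}^N satisfy Σ_i σ_i = 0, let W be a symmetric real N×N matrix with zero diagonal, and let w_in, w_out ≥ 0 satisfy w_in + w_out ≤ 2. Let EW := ((w_in + w_out)/2)·11ᵀ + ((w_in − w_out)/2)·σσᵀ − w_in·I. Define the diagonal matrix D by D_{ii} = Σ_j W_{ij} σ_i σ_j, and set S := D + 11ᵀ − W. Then for every x ∈ ℝ^N with xᵀσ = 0 and ‖x‖₂ = 1, one has xᵀ S x ≥ min_i D_{ii} − ‖W − EW‖₂, where ‖·‖₂ denotes the spectral (operator) norm. -/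
/-!
For `x ⊥ σ` with `‖x‖ = 1` the `σσᵀ` part of `EW` is invisible, so
`xᵀ EW x = (w_in + w_out)/2 · (Σ xᵢ)² − w_in` and
`xᵀ S x = xᵀ D x + (1 − (w_in + w_out)/2)(Σ xᵢ)² + w_in − xᵀ (W − EW) x`.
The middle terms are nonnegative, `xᵀ D x ≥ min_i D_ii` since `D` is diagonal,
and `xᵀ (W − EW) x ≤ ‖W − EW‖₂`.
-/

open Matrix

section QuadraticForm

variable {n : Type*} [Fintype n]

theorem dotProduct_vecMulVec_mulVec (u v x : n → ℝ) :
    x ⬝ᵥ vecMulVec u v *ᵥ x = (x ⬝ᵥ u) * (v ⬝ᵥ x) := by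
  simp [vecMulVec_mulVec, dotProduct_smul, mul_comm]

theorem dotProduct_ones_mulVec (x : n → ℝ) :
    x ⬝ᵥ (of fun _ _ => (1 : ℝ) : Matrix n n ℝ) *ᵥ x = (∑ i, x i) ^ 2 := by
  have hJ : (of fun _ _ => (1 : ℝ) : Matrix n n ℝ) = vecMulVec 1 1 := by
    ext; simp [vecMulVec_apply]
  rw [hJ, dotProduct_vecMulVec_mulVec, dotProduct_one, one_dotProduct, sq]

variable [DecidableEq n]

theorem iInf_mul_dotProduct_self_le_dotProduct_diagonal_mulVec (d x : n → ℝ) :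
    (⨅ i, d i) * (x ⬝ᵥ x) ≤ x ⬝ᵥ diagonal d *ᵥ x := by
  simp only [mulVec_diagonal, dotProduct, Finset.mul_sum]
  refine Finset.sum_le_sum fun i _ => ?_
  calc (⨅ i, d i) * (x i * x i) ≤ d i * (x i * x i) :=
        mul_le_mul_of_nonneg_right (ciInf_le (Set.finite_range d).bddBelow i) (mul_self_nonneg _)
    _ = x i * (d i * x i) := by ring

theorem dotProduct_mulVec_le_norm_toEuclideanCLM_mul (M : Matrix n n ℝ) (x : n → ℝ) :
    x ⬝ᵥ M *ᵥ x ≤ ‖toEuclideanCLM (𝕜 := ℝ) M‖ * (x ⬝ᵥ x) := by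
  set v : EuclideanSpace ℝ n := WithLp.toLp 2 x
  have hv : x ⬝ᵥ x = ‖v‖ ^ 2 := by
    rw [EuclideanSpace.norm_sq_eq]
    simp [v, dotProduct, sq]
  calc x ⬝ᵥ M *ᵥ x = inner ℝ v (toEuclideanCLM (𝕜 := ℝ) M v) := (inner_toEuclideanCLM M v v).symm
    _ ≤ ‖v‖ * ‖toEuclideanCLM (𝕜 := ℝ) M v‖ := real_inner_le_norm _ _
    _ ≤ ‖v‖ * (‖toEuclideanCLM (𝕜 := ℝ) M‖ * ‖v‖) := by
        gcongr
        exact (toEuclideanCLM (𝕜 := ℝ) M).le_opNorm v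
    _ = ‖toEuclideanCLM (𝕜 := ℝ) M‖ * (x ⬝ᵥ x) := by rw [hv]; ring

end QuadraticForm

theorem quadratic_form_lower_bound_assortative_general
    (N : ℕ)
    (σ : Fin N → ℝ)
    (W : Matrix (Fin N) (Fin N) ℝ)
    (win wout : ℝ) (hwin : 0 ≤ win) (hw2 : win + wout ≤ 2)
    (EW : Matrix (Fin N) (Fin N) ℝ)
    (hEW : EW = ((win + wout) / 2) • (Matrix.of fun _ _ => (1 : ℝ))
      + ((win - wout) / 2) • vecMulVec σ σ - win • (1 : Matrix (Fin N) (Fin N) ℝ))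
    (D : Matrix (Fin N) (Fin N) ℝ)
    (hD : D = Matrix.diagonal (fun i => ∑ j, W i j * σ i * σ j))
    (S : Matrix (Fin N) (Fin N) ℝ)
    (hS : S = D + (Matrix.of fun _ _ => (1 : ℝ)) - W)
    (x : Fin N → ℝ) (hxσ : x ⬝ᵥ σ = 0) (hx : ∑ i, x i ^ 2 = 1) :
    (⨅ i, D i i) - ‖Matrix.toEuclideanCLM (𝕜 := ℝ) (W - EW)‖ ≤ x ⬝ᵥ S.mulVec x := by
  have hxx : x ⬝ᵥ x = 1 := by simpa [dotProduct, sq] using hx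
  have hEWx : x ⬝ᵥ EW *ᵥ x = (win + wout) / 2 * (∑ i, x i) ^ 2 - win := by
    simp only [hEW, sub_mulVec, add_mulVec, smul_mulVec, one_mulVec, dotProduct_sub,
      dotProduct_add, dotProduct_smul, dotProduct_ones_mulVec, dotProduct_vecMulVec_mulVec,
      hxσ, hxx, smul_eq_mul]
    ring
  have hSx : x ⬝ᵥ S *ᵥ x = x ⬝ᵥ D *ᵥ x + (1 - (win + wout) / 2) * (∑ i, x i) ^ 2 + win
      - x ⬝ᵥ (W - EW) *ᵥ x := by
    rw [hS, sub_mulVec, add_mulVec, sub_mulVec (A := W), dotProduct_sub, dotProduct_sub,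
      dotProduct_add, dotProduct_ones_mulVec, hEWx]
    ring
  have hDx := iInf_mul_dotProduct_self_le_dotProduct_diagonal_mulVec
    (fun i => ∑ j, W i j * σ i * σ j) x
  have hWx := dotProduct_mulVec_le_norm_toEuclideanCLM_mul (W - EW) x
  have hsum : 0 ≤ (1 - (win + wout) / 2) * (∑ i, x i) ^ 2 :=
    mul_nonneg (by linarith) (sq_nonneg _)
  rw [hxx, mul_one] at hDx hWx
  rw [hSx, hD]
  simp only [diagonal_apply_eq]
  linarith

/-- assortative case: for the dual certificate matrix
`S = D + 11ᵀ − W` with `D_ii = Σ_j W_ij σ_i σ_j`, every unit vector `x ⊥ σ`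
satisfies `xᵀSx ≥ min_i D_ii − ‖W − EW‖₂` (spectral norm). -/
theorem quadratic_form_lower_bound_assortative
    (N : ℕ) (hN : Even N)
    (σ : Fin N → ℝ) (hσ : ∀ i, σ i = 1 ∨ σ i = -1) (hbal : ∑ i, σ i = 0)
    (W : Matrix (Fin N) (Fin N) ℝ) (hWsymm : W.IsSymm) (hWdiag : ∀ i, W i i = 0)
    (win wout : ℝ) (hwin : 0 ≤ win) (hwout : 0 ≤ wout) (hw2 : win + wout ≤ 2)
    (EW : Matrix (Fin N) (Fin N) ℝ)
    (hEW : EW = ((win + wout) / 2) • (Matrix.of fun _ _ => (1 : ℝ))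
      + ((win - wout) / 2) • vecMulVec σ σ - win • (1 : Matrix (Fin N) (Fin N) ℝ))
    (D : Matrix (Fin N) (Fin N) ℝ)
    (hD : D = Matrix.diagonal (fun i => ∑ j, W i j * σ i * σ j))
    (S : Matrix (Fin N) (Fin N) ℝ)
    (hS : S = D + (Matrix.of fun _ _ => (1 : ℝ)) - W)
    (x : Fin N → ℝ) (hxσ : x ⬝ᵥ σ = 0) (hx : ∑ i, x i ^ 2 = 1) :
    (⨅ i, D i i) - ‖Matrix.toEuclideanCLM (𝕜 := ℝ) (W - EW)‖ ≤ x ⬝ᵥ S.mulVec x :=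
  quadratic_form_lower_bound_assortative_general N σ W win wout hwin hw2 EW hEW D hD S hS x hxσ hx
end

section
/- The function ψ attains its supremum on ℝ: sup_{x∈ℝ} ψ(x) is finite and there exists x* ∈ ℝ with ψ(x*) = sup_{x∈ℝ} ψ(x). In particular, ψ(x) → −∞ as x → +∞ and as x → −∞. -/
open Finset Filter Real

/-!
Each summand `a * (1 - exp (-(x * b)))` with `a ≥ 0` is bounded above by `a`, so `ψ` is bounded
above by the sum of its weights, and it tends to `-∞` along a filter as soon as one summand with
positive weight does. For `r = d - 1` the exponent `-(x * (1 - d))` grows linearly as `x → +∞`, and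
for `r = 0` the exponent `-(x * (d - 1))` grows linearly as `x → -∞`. A continuous function tending
to `-∞` at both ends of `ℝ` tends to `-∞` along the cocompact filter, hence attains its maximum.
-/

theorem Continuous.bddAbove_range_and_exists_eq_ciSup {X β : Type*} [TopologicalSpace X]
    [Nonempty X] [ConditionallyCompleteLinearOrder β] [TopologicalSpace β] [ClosedIciTopology β]
    {f : X → β} (hf : Continuous f) (hlim : Tendsto f (cocompact X) atBot) :
    BddAbove (Set.range f) ∧ ∃ x, f x = ⨆ y, f y := by
  obtain ⟨x, hx⟩ := hf.exists_forall_ge hlim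
  have hbdd : BddAbove (Set.range f) := ⟨f x, Set.forall_mem_range.2 hx⟩
  exact ⟨hbdd, x, le_antisymm (le_ciSup hbdd x) (ciSup_le hx)⟩

theorem Real.tendsto_cocompact_atBot_of_atTop_of_atBot {β : Type*} [Preorder β] {f : ℝ → β}
    (htop : Tendsto f atTop atBot) (hbot : Tendsto f atBot atBot) :
    Tendsto f (cocompact ℝ) atBot := by
  rw [cocompact_eq_atBot_atTop, tendsto_sup]
  exact ⟨hbot, htop⟩

theorem Finset.tendsto_sum_atBot_of_forall_le {ι α G : Type*} [AddCommGroup G] [PartialOrder G]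
    [IsOrderedAddMonoid G] {l : Filter α} {s : Finset ι} {f : ι → α → G} (C : ι → G)
    (hC : ∀ i ∈ s, ∀ x, f i x ≤ C i) {j : ι} (hj : j ∈ s) (hfj : Tendsto (f j) l atBot) :
    Tendsto (fun x ↦ ∑ i ∈ s, f i x) l atBot := by
  classical
  have hsplit : (fun x ↦ ∑ i ∈ s, f i x) = fun x ↦ f j x + ∑ i ∈ s.erase j, f i x :=
    funext fun x ↦ (add_sum_erase s (f · x) hj).symm
  rw [hsplit]
  exact tendsto_atBot_add_right_of_ge l (∑ i ∈ s.erase j, C i) hfj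
    fun x ↦ sum_le_sum fun i hi ↦ hC i (mem_of_mem_erase hi) x

theorem mul_one_sub_exp_le {a : ℝ} (ha : 0 ≤ a) (y : ℝ) : a * (1 - exp y) ≤ a :=
  mul_le_of_le_one_right ha (by linarith [exp_pos y])

theorem tendsto_mul_one_sub_exp_atBot {α : Type*} {l : Filter α} {g : α → ℝ} {a : ℝ}
    (ha : 0 < a) (hg : Tendsto g l atTop) : Tendsto (fun x ↦ a * (1 - exp (g x))) l atBot := by
  simp only [sub_eq_add_neg]
  exact (tendsto_atBot_add_const_left l 1
    (tendsto_neg_atTop_atBot.comp (tendsto_exp_atTop.comp hg))).const_mul_atBot ha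

theorem tendsto_sum_binomial_one_sub_exp_atBot {M : ℕ} (d : Fin M → ℕ) (α : Fin M → ℕ → ℝ)
    (hα : ∀ m r, r < d m → 0 ≤ α m r) {ψ : ℝ → ℝ}
    (hψ : ∀ x, ψ x = ∑ m, ((2 : ℝ) ^ (d m - 1))⁻¹ * ∑ r ∈ range (d m),
      ((d m - 1).choose r : ℝ) * α m r * (1 - exp (-(x * ((d m : ℝ) - 1 - 2 * r)))))
    {l : Filter ℝ} {m₀ : Fin M} {r₀ : ℕ} (hr₀ : r₀ < d m₀) (hαr₀ : 0 < α m₀ r₀)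
    (hexp : Tendsto (fun x ↦ -(x * ((d m₀ : ℝ) - 1 - 2 * r₀))) l atTop) :
    Tendsto ψ l atBot := by
  have hweight : ∀ m, ∀ r ∈ range (d m), 0 ≤ ((d m - 1).choose r : ℝ) * α m r :=
    fun m r hr ↦ mul_nonneg (Nat.cast_nonneg _) (hα m r (mem_range.1 hr))
  rw [funext hψ]
  refine tendsto_sum_atBot_of_forall_le
    (fun m ↦ ((2 : ℝ) ^ (d m - 1))⁻¹ * ∑ r ∈ range (d m), ((d m - 1).choose r : ℝ) * α m r)
    (fun m _ x ↦ mul_le_mul_of_nonneg_left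
      (sum_le_sum fun r hr ↦ mul_one_sub_exp_le (hweight m r hr) _) (by positivity))
    (mem_univ m₀) (Tendsto.const_mul_atBot (by positivity) ?_)
  refine tendsto_sum_atBot_of_forall_le _
    (fun r hr _ ↦ mul_one_sub_exp_le (hweight m₀ r hr) _) (mem_range.2 hr₀) ?_
  have hchoose : (0 : ℝ) < (d m₀ - 1).choose r₀ := Nat.cast_pos.2 (Nat.choose_pos (by omega))
  exact tendsto_mul_one_sub_exp_atBot (mul_pos hchoose hαr₀) hexp

/-- ψ attains its (finite) supremum on ℝ; in particular
ψ(x) → −∞ as x → +∞ and as x → −∞. -/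
theorem psi_attains_sup
    (M : ℕ) (hM : 1 ≤ M) (d : Fin M → ℕ) (hd : ∀ m, 2 ≤ d m)
    (α : Fin M → ℕ → ℝ) (hα : ∀ m r, r ≤ d m → 0 < α m r)
    (ψ : ℝ → ℝ)
    (hψ : ∀ x, ψ x = ∑ m, ((2 : ℝ) ^ (d m - 1))⁻¹ * ∑ r ∈ Finset.range (d m),
      ((d m - 1).choose r : ℝ) * α m r
        * (1 - Real.exp (-(x * ((d m : ℝ) - 1 - 2 * r))))) :
    BddAbove (Set.range ψ)
    ∧ (∃ xstar : ℝ, ψ xstar = ⨆ x : ℝ, ψ x)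
    ∧ Tendsto ψ atTop atBot
    ∧ Tendsto ψ atBot atBot := by
  have hα' : ∀ m r, r < d m → 0 ≤ α m r := fun m r hr ↦ (hα m r hr.le).le
  obtain ⟨m₀⟩ : Nonempty (Fin M) := ⟨⟨0, hM⟩⟩
  have hd₀ : (2 : ℝ) ≤ d m₀ := by exact_mod_cast hd m₀
  have hslope : (0 : ℝ) < d m₀ - 1 := by linarith
  have htop : Tendsto ψ atTop atBot := by
    refine tendsto_sum_binomial_one_sub_exp_atBot d α hα' hψ (r₀ := d m₀ - 1) (by grind)
      (hα m₀ _ (Nat.sub_le _ _)) ?_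
    have hexp (x : ℝ) : -(x * ((d m₀ : ℝ) - 1 - 2 * ((d m₀ - 1 : ℕ) : ℝ))) = x * (d m₀ - 1) := by
      rw [Nat.cast_sub (by grind)]
      ring
    simpa only [hexp, id_eq] using tendsto_id.atTop_mul_const hslope
  have hbot : Tendsto ψ atBot atBot := by
    refine tendsto_sum_binomial_one_sub_exp_atBot d α hα' hψ (r₀ := 0) (by grind)
      (hα m₀ 0 (by grind)) ?_
    simpa only [Nat.cast_zero, mul_zero, sub_zero, ← neg_mul]
      using tendsto_neg_atBot_atTop.atTop_mul_const hslope
  have hcont : Continuous ψ := by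
    rw [funext hψ]
    fun_prop
  obtain ⟨hbdd, hmax⟩ := hcont.bddAbove_range_and_exists_eq_ciSup
    (tendsto_cocompact_atBot_of_atTop_of_atBot htop hbot)
  exact ⟨hbdd, hmax, htop, hbot⟩
end

section
/- Let s = sgn(ξ) with ξ ≠ 0. Then the supremum of ψ over all of ℝ is attained on the half-line {s·λ : λ ≥ 0}; that is, sup_{x∈ℝ} ψ(x) = sup_{λ≥0} ψ(s·λ). (Equivalently: if ξ > 0 then sup_{x∈ℝ} ψ(x) = sup_{x≥0} ψ(x), and if ξ < 0 then sup_{x∈ℝ} ψ(x) = sup_{x≤0} ψ(x).) -/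
open Finset Real

/-!
Since `1 - e^{-t} ≤ t` and all weights are nonnegative, `ψ x ≤ x ξ` for every `x`, while
`ψ 0 = 0`. Hence a point `x` with `x ξ ≤ 0` gives no more than `ψ 0`, and every other point
has the sign of `ξ`, i.e. lies on the half-line `sign ξ · [0, ∞)`. The two suprema therefore
dominate each other, whether or not they are finite.
-/

lemma sum_mul_one_sub_exp_neg_le {ι : Type*} (t : Finset ι) (c a : ι → ℝ)
    (hc : ∀ i ∈ t, 0 ≤ c i) (x : ℝ) :
    ∑ i ∈ t, c i * (1 - exp (-(x * a i))) ≤ x * ∑ i ∈ t, c i * a i := by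
  rw [mul_sum]
  refine sum_le_sum fun i hi => ?_
  calc c i * (1 - exp (-(x * a i))) ≤ c i * (x * a i) :=
        mul_le_mul_of_nonneg_left (by linarith [one_sub_le_exp_neg (x * a i)]) (hc i hi)
    _ = x * (c i * a i) := by ring

lemma weighted_binomial_sum_one_sub_exp_neg_le {M : ℕ} (d : Fin M → ℕ) (α : Fin M → ℕ → ℝ)
    (hα : ∀ m, ∀ r < d m, 0 ≤ α m r) (x : ℝ) :
    ∑ m, ((2 : ℝ) ^ (d m - 1))⁻¹ * ∑ r ∈ range (d m),
      ((d m - 1).choose r : ℝ) * α m r * (1 - exp (-(x * ((d m : ℝ) - 1 - 2 * r))))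
    ≤ x * ∑ m, ((2 : ℝ) ^ (d m - 1))⁻¹ * ∑ r ∈ range (d m),
      ((d m - 1).choose r : ℝ) * ((d m : ℝ) - 1 - 2 * r) * α m r := by
  calc _ ≤ ∑ m, ((2 : ℝ) ^ (d m - 1))⁻¹ * (x * ∑ r ∈ range (d m),
          ((d m - 1).choose r : ℝ) * α m r * ((d m : ℝ) - 1 - 2 * r)) :=
        sum_le_sum fun m _ => mul_le_mul_of_nonneg_left (sum_mul_one_sub_exp_neg_le _ _ _
          (fun r hr => mul_nonneg (Nat.cast_nonneg _) (hα m r (mem_range.mp hr))) x)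
          (by positivity)
    _ = _ := by
        simp only [mul_sum, mul_left_comm x, mul_right_comm _ (α _ _)]

section HalfLine

variable {f : ℝ → ℝ} {ξ : ℝ}

lemma exists_nonneg_le_apply_sign_mul (h0 : f 0 = 0) (hle : ∀ x, f x ≤ x * ξ) (x : ℝ) :
    ∃ l, 0 ≤ l ∧ f x ≤ f (Real.sign ξ * l) := by
  by_cases hxξ : x * ξ ≤ 0
  · exact ⟨0, le_rfl, by simpa [h0] using (hle x).trans hxξ⟩
  refine ⟨|x|, abs_nonneg x, le_of_eq (congrArg f ?_)⟩
  rcases pos_and_pos_or_neg_and_neg_of_mul_pos (not_le.mp hxξ) with ⟨hx, hξ⟩ | ⟨hx, hξ⟩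
  · rw [Real.sign_of_pos hξ, abs_of_pos hx, one_mul]
  · rw [Real.sign_of_neg hξ, abs_of_neg hx, neg_one_mul, neg_neg]

lemma iSup_eq_iSup_sign_mul_nonneg (h0 : f 0 = 0) (hle : ∀ x, f x ≤ x * ξ) :
    (⨆ x, f x) = ⨆ l : {l : ℝ // 0 ≤ l}, f (Real.sign ξ * l.1) := by
  refine csSup_eq_csSup_of_forall_exists_le ?_ ?_
  · rintro _ ⟨x, rfl⟩
    obtain ⟨l, hl, hxl⟩ := exists_nonneg_le_apply_sign_mul h0 hle x
    exact ⟨_, Set.mem_range_self ⟨l, hl⟩, hxl⟩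
  · rintro _ ⟨l, rfl⟩
    exact ⟨_, Set.mem_range_self _, le_rfl⟩

end HalfLine

theorem psi_sup_on_halfline_general
    (M : ℕ) (d : Fin M → ℕ)
    (α : Fin M → ℕ → ℝ) (hα : ∀ m r, r ≤ d m → 0 < α m r)
    (ψ : ℝ → ℝ)
    (hψ : ∀ x, ψ x = ∑ m, ((2 : ℝ) ^ (d m - 1))⁻¹ * ∑ r ∈ Finset.range (d m),
      ((d m - 1).choose r : ℝ) * α m r
        * (1 - Real.exp (-(x * ((d m : ℝ) - 1 - 2 * r)))))
    (ξ : ℝ)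
    (hξdef : ξ = ∑ m, ((2 : ℝ) ^ (d m - 1))⁻¹ * ∑ r ∈ Finset.range (d m),
      ((d m - 1).choose r : ℝ) * ((d m : ℝ) - 1 - 2 * r) * α m r)
    (s : ℝ) (hs : s = Real.sign ξ) :
    (⨆ x : ℝ, ψ x) = ⨆ l : {l : ℝ // 0 ≤ l}, ψ (s * l.1) := by
  have h0 : ψ 0 = 0 := by simp [hψ]
  have hle : ∀ x, ψ x ≤ x * ξ := fun x => by
    rw [hψ, hξdef]
    exact weighted_binomial_sum_one_sub_exp_neg_le d α (fun m r hr => (hα m r hr.le).le) x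
  rw [hs]
  exact iSup_eq_iSup_sign_mul_nonneg h0 hle

/-- with s = sgn(ξ) and ξ ≠ 0, the supremum of ψ over ℝ is
attained on the half-line {s·λ : λ ≥ 0}. -/
theorem psi_sup_on_halfline
    (M : ℕ) (hM : 1 ≤ M) (d : Fin M → ℕ) (hd : ∀ m, 2 ≤ d m)
    (α : Fin M → ℕ → ℝ) (hα : ∀ m r, r ≤ d m → 0 < α m r)
    (ψ : ℝ → ℝ)
    (hψ : ∀ x, ψ x = ∑ m, ((2 : ℝ) ^ (d m - 1))⁻¹ * ∑ r ∈ Finset.range (d m),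
      ((d m - 1).choose r : ℝ) * α m r
        * (1 - Real.exp (-(x * ((d m : ℝ) - 1 - 2 * r)))))
    (ξ : ℝ)
    (hξdef : ξ = ∑ m, ((2 : ℝ) ^ (d m - 1))⁻¹ * ∑ r ∈ Finset.range (d m),
      ((d m - 1).choose r : ℝ) * ((d m : ℝ) - 1 - 2 * r) * α m r)
    (hξ : ξ ≠ 0)
    (s : ℝ) (hs : s = Real.sign ξ) :
    (⨆ x : ℝ, ψ x) = ⨆ l : {l : ℝ // 0 ≤ l}, ψ (s * l.1) :=
  psi_sup_on_halfline_general M d α hα ψ hψ ξ hξdef s hs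
end

section
/- For even N, define w_in(N) := Σ_{m=1}^M Σ_{r=0}^{d_m−2} C(N/2 − 2, d_m−2−r) · C(N/2, r) · min( α^{(m)}_{(r, d_m−r)}·log N / C(N−1, d_m−1), 1 ). Then w_in(N) = Θ(log N / N) along even N: there exist constants 0 < c ≤ C and N₀ such that for all even N ≥ N₀, c·log N / N ≤ w_in(N) ≤ C·log N / N. -/
/-!
For even `N = 2t` every binomial weight satisfies `C(t-2, d-2-r) C(t, r) ≤ t^(d-2)`, while
`C(N-1, d-1) ≥ t^(d-1)/(d-1)!`, so dropping the `min` bounds each summand by `O(log N / N)`.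
For the lower bound keep the single summand `r = 0` of one family: as `log N = o(N)`, eventually
`α log N ≤ C(N-1, d-1)`, so the `min` is its first argument, and
`C(t-2, d-2) ≥ (t/2)^(d-2)/(d-2)!` against `C(N-1, d-1) ≤ N^(d-1)` gives `Ω(log N / N)`.
-/

open Finset Nat Filter

theorem Nat.choose_mul_choose_le_pow {a n k r : ℕ} (ha : a ≤ n) (hr : r ≤ k) :
    a.choose (k - r) * n.choose r ≤ n ^ k :=
  calc a.choose (k - r) * n.choose r ≤ n ^ (k - r) * n ^ r :=
        Nat.mul_le_mul ((choose_le_pow a _).trans (Nat.pow_le_pow_left ha _)) (choose_le_pow n r)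
    _ = n ^ k := by rw [← pow_add, Nat.sub_add_cancel hr]

theorem pow_div_factorial_le_choose_two_mul_sub_one {t k : ℕ} (hk : k ≤ t) :
    (t : ℝ) ^ k / k ! ≤ (2 * t - 1).choose k := by
  refine le_trans ?_ (Nat.pow_le_choose k (2 * t - 1))
  gcongr
  exact_mod_cast (by omega : t ≤ 2 * t - 1 + 1 - k)

theorem half_pow_div_factorial_le_choose_sub_two {t k : ℕ} (h : 2 * k + 2 ≤ t) :
    ((t : ℝ) / 2) ^ k / k ! ≤ (t - 2).choose k := by
  refine le_trans ?_ (Nat.pow_le_choose k (t - 2))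
  gcongr
  have : (2 * k + 2 : ℝ) ≤ t := by exact_mod_cast h
  rw [show t - 2 + 1 - k = t - (k + 1) by omega, Nat.cast_sub (by omega)]
  push_cast
  linarith

theorem choose_mul_choose_mul_min_div_le {t d r : ℕ} (hr : r + 2 ≤ d) (hdt : d ≤ t + 1)
    {x : ℝ} (hx : 0 ≤ x) :
    (((t - 2).choose (d - 2 - r) * t.choose r : ℕ) : ℝ)
        * min (x / ((2 * t - 1).choose (d - 1) : ℕ)) 1 ≤ (d - 1)! * x / t := by
  have ht : (0 : ℝ) < t := by exact_mod_cast (by omega : 0 < t)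
  have hP : (((t - 2).choose (d - 2 - r) * t.choose r : ℕ) : ℝ) ≤ (t : ℝ) ^ (d - 2) := by
    exact_mod_cast Nat.choose_mul_choose_le_pow (Nat.sub_le t 2) (by omega)
  have hQ := pow_div_factorial_le_choose_two_mul_sub_one (t := t) (k := d - 1) (by omega)
  calc _ ≤ (t : ℝ) ^ (d - 2) * (x / ((2 * t - 1).choose (d - 1) : ℕ)) :=
        mul_le_mul hP (min_le_left _ _) (le_min (by positivity) zero_le_one) (by positivity)
    _ ≤ (t : ℝ) ^ (d - 2) * (x / ((t : ℝ) ^ (d - 1) / (d - 1)!)) := by gcongr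
    _ = (d - 1)! * x / t := by
        rw [show d - 1 = d - 2 + 1 by omega, pow_succ]
        field_simp

theorem div_le_choose_sub_two_mul_div {t d : ℕ} (hd : 2 ≤ d) (hdt : 2 * d ≤ t + 2)
    {x : ℝ} (hx : 0 ≤ x) :
    x / (4 ^ (d - 2) * (d - 2)! * (2 * t)) ≤
      (t - 2).choose (d - 2) * (x / ((2 * t - 1).choose (d - 1) : ℕ)) := by
  obtain ⟨k, rfl⟩ : ∃ k, d = k + 2 := ⟨d - 2, by omega⟩
  simp only [Nat.add_sub_cancel, show k + 2 - 1 = k + 1 by omega]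
  have ht : (0 : ℝ) < t := by exact_mod_cast (by omega : 0 < t)
  have hB := half_pow_div_factorial_le_choose_sub_two (t := t) (k := k) (by omega)
  have hQpos : (0 : ℝ) < (2 * t - 1).choose (k + 1) := by
    exact_mod_cast Nat.choose_pos (by omega)
  have hQ : (((2 * t - 1).choose (k + 1) : ℕ) : ℝ) ≤ (2 * t : ℝ) ^ (k + 1) := by
    exact_mod_cast (choose_le_pow _ _).trans (Nat.pow_le_pow_left (Nat.sub_le _ _) _)
  calc x / (4 ^ k * k ! * (2 * t)) = ((t : ℝ) / 2) ^ k / k ! * (x / (2 * t : ℝ) ^ (k + 1)) := by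
        rw [div_pow, show (4 : ℝ) ^ k = 2 ^ k * 2 ^ k by rw [← mul_pow]; norm_num]
        field_simp
        ring
    _ ≤ _ := by gcongr

/-- The contribution of one family to `w_in(N)`, with `log N` abstracted to `L`. -/
noncomputable def winBlock (d : ℕ) (a : ℕ → ℝ) (N : ℕ) (L : ℝ) : ℝ :=
  ∑ r ∈ range (d - 1), (((N / 2 - 2).choose (d - 2 - r) * (N / 2).choose r : ℕ) : ℝ)
    * min (a r * L / (((N - 1).choose (d - 1) : ℕ) : ℝ)) 1

section winBlock

variable {d N : ℕ} {a : ℕ → ℝ} {L : ℝ}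

theorem winBlock_nonneg (ha : ∀ r < d - 1, 0 ≤ a r) (hL : 0 ≤ L) : 0 ≤ winBlock d a N L :=
  sum_nonneg fun r hr => mul_nonneg (Nat.cast_nonneg _)
    (le_min (div_nonneg (mul_nonneg (ha r (mem_range.1 hr)) hL) (Nat.cast_nonneg _)) zero_le_one)

theorem winBlock_le (hN : Even N) (hdN : 2 * (d - 1) ≤ N) (ha : ∀ r < d - 1, 0 ≤ a r)
    (hL : 0 ≤ L) : winBlock d a N L ≤ 2 * (d - 1)! * (∑ r ∈ range (d - 1), a r) * L / N := by
  obtain ⟨t, rfl⟩ := hN.two_dvd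
  rw [mul_sum, sum_mul, sum_div]
  refine sum_le_sum fun r hr => ?_
  have hr := mem_range.1 hr
  rw [Nat.mul_div_cancel_left t two_pos]
  calc _ ≤ (d - 1)! * (a r * L) / t :=
        choose_mul_choose_mul_min_div_le (by omega) (by omega) (mul_nonneg (ha r hr) hL)
    _ = _ := by
        push_cast
        field_simp

theorem le_winBlock (hN : Even N) (hd : 2 ≤ d) (hdN : 4 * (d - 1) ≤ N)
    (ha : ∀ r < d - 1, 0 ≤ a r) (hL : 0 ≤ L) (hsmall : a 0 * L ≤ N / (2 * (d - 1)!)) :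
    a 0 * L / (4 ^ (d - 2) * (d - 2)! * N) ≤ winBlock d a N L := by
  obtain ⟨t, rfl⟩ := hN.two_dvd
  have hx : 0 ≤ a 0 * L := mul_nonneg (ha 0 (by omega)) hL
  have hQ : a 0 * L ≤ ((2 * t - 1).choose (d - 1) : ℕ) :=
    calc a 0 * L ≤ (t : ℝ) / (d - 1)! := hsmall.trans_eq (by push_cast; field_simp)
      _ ≤ (t : ℝ) ^ (d - 1) / (d - 1)! := by
          gcongr
          exact le_self_pow₀ (by exact_mod_cast (by omega : 1 ≤ t)) (by omega)
      _ ≤ _ := pow_div_factorial_le_choose_two_mul_sub_one (by omega)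
  calc _ = a 0 * L / (4 ^ (d - 2) * (d - 2)! * (2 * t)) := by push_cast; rfl
    _ ≤ (t - 2).choose (d - 2) * (a 0 * L / ((2 * t - 1).choose (d - 1) : ℕ)) :=
        div_le_choose_sub_two_mul_div hd (by omega) hx
    _ = (((t - 2).choose (d - 2 - 0) * t.choose 0 : ℕ) : ℝ)
          * min (a 0 * L / ((2 * t - 1).choose (d - 1) : ℕ)) 1 := by
        rw [min_eq_left (div_le_one_of_le₀ hQ (Nat.cast_nonneg _))]
        simp
    _ ≤ winBlock d a (2 * t) L := by
        rw [winBlock, Nat.mul_div_cancel_left t two_pos]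
        exact single_le_sum (f := fun r => (((t - 2).choose (d - 2 - r) * t.choose r : ℕ) : ℝ)
          * min (a r * L / ((2 * t - 1).choose (d - 1) : ℕ)) 1)
          (fun r hr => mul_nonneg (Nat.cast_nonneg _) (le_min (div_nonneg
            (mul_nonneg (ha r (mem_range.1 hr)) hL) (Nat.cast_nonneg _)) zero_le_one))
          (mem_range.2 (by omega))

end winBlock

theorem eventually_mul_log_le_div (a : ℝ) {c : ℝ} (hc : 0 < c) :
    ∀ᶠ n : ℕ in atTop, a * Real.log n ≤ n / c := by
  have h := (Real.isLittleO_log_id_atTop.const_mul_left (a * c)).bound one_pos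
  filter_upwards [tendsto_natCast_atTop_atTop.eventually h] with n hn
  rw [le_div_iff₀ hc]
  simp only [Real.norm_eq_abs, id, one_mul, Nat.abs_cast] at hn
  linarith [le_abs_self (a * c * Real.log n)]

theorem win_theta_logN_over_N_general
    (M : ℕ) (hM : 1 ≤ M) (d : Fin M → ℕ) (hd : ∀ m, 2 ≤ d m)
    (α : Fin M → ℕ → ℝ) (hα : ∀ m r, r ≤ d m → 0 < α m r)
    (win : ℕ → ℝ)
    (hwin : ∀ N, win N = ∑ m, ∑ r ∈ Finset.range (d m - 1),
      (((N / 2 - 2).choose (d m - 2 - r) * (N / 2).choose r : ℕ) : ℝ)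
        * min (α m r * Real.log N / (((N - 1).choose (d m - 1) : ℕ) : ℝ)) 1) :
    ∃ c C : ℝ, ∃ N₀ : ℕ, 0 < c ∧ c ≤ C ∧
      ∀ N : ℕ, N₀ ≤ N → Even N →
        c * Real.log N / N ≤ win N ∧ win N ≤ C * Real.log N / N := by
  obtain ⟨m₀⟩ : Nonempty (Fin M) := ⟨⟨0, hM⟩⟩
  have hα' : ∀ m, ∀ r < d m - 1, 0 ≤ α m r := fun m r hr => (hα m r (by omega)).le
  set c := α m₀ 0 / (4 ^ (d m₀ - 2) * (d m₀ - 2)!)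
  set C := ∑ m, 2 * (d m - 1)! * ∑ r ∈ range (d m - 1), α m r
  obtain ⟨N₀, hN₀⟩ := eventually_atTop.1 <| (eventually_ge_atTop (4 * d m₀)).and <|
    (eventually_all.2 fun m => eventually_ge_atTop (2 * d m)).and <|
    eventually_mul_log_le_div (α m₀ 0) (c := 2 * (d m₀ - 1)!) (by positivity)
  refine ⟨c, max c C, N₀, div_pos (hα m₀ 0 (Nat.zero_le _)) (by positivity), le_max_left _ _,
    fun N hN hNeven => ?_⟩
  obtain ⟨h4d, h2d, hsmall⟩ := hN₀ N hN
  have hL : 0 ≤ Real.log N := Real.log_natCast_nonneg N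
  rw [show win N = ∑ m, winBlock (d m) (α m) N (Real.log N) from hwin N]
  constructor
  · calc c * Real.log N / N = α m₀ 0 * Real.log N / (4 ^ (d m₀ - 2) * (d m₀ - 2)! * N) := by
          rw [div_mul_eq_mul_div, div_div]
      _ ≤ winBlock (d m₀) (α m₀) N (Real.log N) :=
          le_winBlock hNeven (hd m₀) (by omega) (hα' m₀) hL hsmall
      _ ≤ _ := single_le_sum (fun m _ => winBlock_nonneg (hα' m) hL) (mem_univ m₀)
  · calc _ ≤ ∑ m, 2 * (d m - 1)! * (∑ r ∈ range (d m - 1), α m r) * Real.log N / N :=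
          sum_le_sum fun m _ => winBlock_le hNeven (by have := h2d m; omega) (hα' m) hL
      _ = C * Real.log N / N := by rw [sum_mul, sum_div]
      _ ≤ max c C * Real.log N / N := by gcongr; exact le_max_right _ _

/-- w_in(N) = Θ(log N / N) along even N. -/
theorem win_theta_logN_over_N
    (M : ℕ) (hM : 1 ≤ M) (d : Fin M → ℕ) (hd : ∀ m, 2 ≤ d m)
    (α : Fin M → ℕ → ℝ) (hα : ∀ m r, r ≤ d m → 0 < α m r)
    (hsym : ∀ m r, r ≤ d m → α m r = α m (d m - r))
    (win : ℕ → ℝ)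
    (hwin : ∀ N, win N = ∑ m, ∑ r ∈ Finset.range (d m - 1),
      (((N / 2 - 2).choose (d m - 2 - r) * (N / 2).choose r : ℕ) : ℝ)
        * min (α m r * Real.log N / (((N - 1).choose (d m - 1) : ℕ) : ℝ)) 1) :
    ∃ c C : ℝ, ∃ N₀ : ℕ, 0 < c ∧ c ≤ C ∧
      ∀ N : ℕ, N₀ ≤ N → Even N →
        c * Real.log N / N ≤ win N ∧ win N ≤ C * Real.log N / N :=
  win_theta_logN_over_N_general M hM d hd α hα win hwin
end

section
/- For each even N, let {Y_{N,m,r} : 1 ≤ m ≤ M, 0 ≤ r ≤ d_m−1} be mutually independent binomial random variables, where Y_{N,m,r} has parameters R_{N,m,r} := C(N/2 − 1, d_m−1−r)·C(N/2, r) and p_{N,m,r} := min( α^{(m)}_{(r, d_m−r)}·log N / C(N−1, d_m−1), 1 ). Let s = sgn(ξ) with ξ ≠ 0 and define D_N := s·Σ_{m=1}^M Σ_{r=0}^{d_m−1} (d_m−1−2r)·Y_{N,m,r}. Then E[D_N] / log N → |ξ| as N → ∞ along even N. -/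
/-!
By linearity, `E[D_N] = s · Σ (d_m - 1 - 2r) R p`, where each binomial mean `R p` comes from the
Bernstein identity `Σ_k k C(R,k) p^k (1-p)^(R-k) = R p`. For `N = 2n` the truncation `min (·) 1`
in `p` is eventually inactive since `log N / C(N-1, d_m-1) → 0`, and, because
`C(an - b, j) ~ (an)^j / j!`, the ratio `C(n-1, d_m-1-r) C(n, r) / C(2n-1, d_m-1)` tends to
`C(d_m-1, r) / 2^(d_m-1)`. Hence `E[D_N] / log N → s ξ = |ξ|`.
-/

open MeasureTheory ProbabilityTheory Finset Filter Asymptotics Topology unitInterval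

lemma isEquivalent_natCast_mul_sub {a : ℕ} (ha : 0 < a) (b : ℕ) :
    (fun n : ℕ => ((a * n - b : ℕ) : ℝ)) ~[atTop] fun n : ℕ => (a * n : ℝ) := by
  have hshift : (fun n : ℕ => ((a * n - b : ℕ) : ℝ)) - (fun n : ℕ => (a * n : ℝ))
      =ᶠ[atTop] fun _ => -(b : ℝ) := by
    filter_upwards [eventually_ge_atTop b] with n hn
    have : b ≤ a * n := hn.trans (Nat.le_mul_of_pos_left n ha)
    simp [Nat.cast_sub this]
  refine (IsLittleO.congr' (isLittleO_const_left.2 (Or.inr ?_)) hshift.symm EventuallyEq.rfl)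
  have : Tendsto (fun n : ℕ => (a : ℝ) * n) atTop atTop :=
    tendsto_natCast_atTop_atTop.const_mul_atTop (by exact_mod_cast ha)
  exact tendsto_norm_atTop_atTop.comp this

lemma isEquivalent_choose_mul_sub {a : ℕ} (ha : 0 < a) (b k : ℕ) :
    (fun n : ℕ => ((a * n - b).choose k : ℝ)) ~[atTop]
      fun n : ℕ => (a * n : ℝ) ^ k / k.factorial :=
  ((isEquivalent_choose k).comp_tendsto
      ((tendsto_sub_atTop_nat b).comp (tendsto_id.const_mul_atTop' ha))).trans
    (((isEquivalent_natCast_mul_sub ha b).pow k).div IsEquivalent.refl)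

lemma tendsto_log_div_choose_pred {k : ℕ} (hk : 0 < k) :
    Tendsto (fun N : ℕ => Real.log N / ((N - 1).choose k : ℝ)) atTop (𝓝 0) := by
  have hC := isEquivalent_choose_mul_sub one_pos 1 k
  simp only [one_mul, Nat.cast_one] at hC
  have hlog : Tendsto (fun x : ℝ => Real.log x / (x ^ k / k.factorial)) atTop (𝓝 0) := by
    have := ((isLittleO_log_rpow_atTop (r := k) (by exact_mod_cast hk)).tendsto_div_nhds_zero
      ).const_mul (k.factorial : ℝ)
    simp only [Real.rpow_natCast, mul_zero] at this
    refine this.congr fun x => ?_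
    field_simp
  exact (IsEquivalent.refl.div hC).symm.tendsto_nhds (hlog.comp tendsto_natCast_atTop_atTop)

lemma tendsto_choose_mul_choose_div_choose {k r : ℕ} (hr : r ≤ k) :
    Tendsto (fun n : ℕ => ((n - 1).choose (k - r) * n.choose r : ℝ) / (2 * n - 1).choose k)
      atTop (𝓝 (k.choose r / 2 ^ k)) := by
  have hA := isEquivalent_choose_mul_sub one_pos 1 (k - r)
  have hC := isEquivalent_choose_mul_sub two_pos 1 k
  simp only [one_mul, Nat.cast_one, Nat.cast_ofNat] at hA hC
  refine ((hA.mul (isEquivalent_choose r)).div hC).symm.tendsto_nhds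
    (tendsto_const_nhds.congr' ?_)
  filter_upwards [eventually_ne_atTop 0] with n hn
  rw [Nat.cast_choose ℝ hr]
  have hn' : (n : ℝ) ≠ 0 := by exact_mod_cast hn
  have hpow : (n : ℝ) ^ k = n ^ (k - r) * n ^ r := by rw [← pow_add, Nat.sub_add_cancel hr]
  simp only [Pi.mul_apply, Pi.div_apply, mul_pow, hpow]
  field_simp

lemma tendsto_choose_mul_choose_mul_min_div_log {k r : ℕ} (hk : 0 < k) (hr : r ≤ k) (c : ℝ) :
    Tendsto (fun n : ℕ => ((n - 1).choose (k - r) * n.choose r : ℝ) *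
        min (c * Real.log (2 * n) / (2 * n - 1).choose k) 1 / Real.log (2 * n))
      atTop (𝓝 (c * (k.choose r / 2 ^ k))) := by
  have hsmall : Tendsto (fun n : ℕ => c * Real.log (2 * n) / (2 * n - 1).choose k)
      atTop (𝓝 0) := by
    simpa [mul_div_assoc] using ((tendsto_log_div_choose_pred hk).comp
      (tendsto_id.const_mul_atTop' two_pos)).const_mul c
  refine ((tendsto_choose_mul_choose_div_choose hr).const_mul c).congr' ?_
  filter_upwards [hsmall.eventually (eventually_lt_nhds one_pos), eventually_ne_atTop 0]
    with n hlt hn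
  have hlog : Real.log (2 * n) ≠ 0 := by
    have : (1 : ℝ) < 2 * n := by
      have : (1 : ℝ) ≤ n := by exact_mod_cast Nat.one_le_iff_ne_zero.2 hn
      linarith
    exact (Real.log_pos this).ne'
  rw [min_eq_left hlt.le]
  field_simp

lemma integral_natCast_binomial (n : ℕ) (p : I) : ∫ k, (k : ℝ) ∂Bin(n, p) = n * p := by
  have := congrArg (Polynomial.eval (p : ℝ)) (bernsteinPolynomial.sum_smul ℝ n)
  simp only [Polynomial.eval_finsetSum, bernsteinPolynomial,
    Polynomial.eval_mul, Polynomial.eval_pow, Polynomial.eval_sub, Polynomial.eval_one,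
    Polynomial.eval_X, Polynomial.eval_natCast, nsmul_eq_mul] at this
  rw [integral_binomial, ← Nat.range_succ_eq_Iic]
  simpa [mul_comm] using this

section

variable {Ω : Type*} [MeasurableSpace Ω] {μ : Measure Ω} {Y : Ω → ℕ} {n : ℕ} {p : I}

lemma hasLaw_binomial_of_measure_eq (hY : Measurable Y)
    (h : ∀ k, μ {ω | Y ω = k} = ENNReal.ofReal (n.choose k * p ^ k * (1 - p) ^ (n - k))) :
    HasLaw Y Bin(n, p) μ where
  aemeasurable := hY.aemeasurable
  map_eq := Measure.ext_of_singleton fun k => by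
    rw [Measure.map_apply hY (measurableSet_singleton k), binomial_singleton]
    exact h k

lemma integrable_natCast_of_hasLaw_binomial (hY : HasLaw Y Bin(n, p) μ) :
    Integrable (fun ω => (Y ω : ℝ)) μ := by
  have := integrable_binomial (n := n) (p := p) (fun k => (k : ℝ))
  rw [← hY.map_eq] at this
  exact (integrable_map_measure this.aestronglyMeasurable hY.aemeasurable).1 this

lemma integral_natCast_of_hasLaw_binomial (hY : HasLaw Y Bin(n, p) μ) :
    ∫ ω, (Y ω : ℝ) ∂μ = n * p := by
  rw [← integral_natCast_binomial]
  exact hY.integral_comp (f := fun k : ℕ => (k : ℝ)) .of_discrete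

lemma integral_sum_sum_mul {ι κ : Type*} {S : Finset ι} {T : ι → Finset κ} (w : ι → κ → ℝ)
    {X : ι → κ → Ω → ℝ} {c : ι → κ → ℝ}
    (hX : ∀ i ∈ S, ∀ j ∈ T i, Integrable (X i j) μ ∧ ∫ ω, X i j ω ∂μ = c i j) :
    ∫ ω, ∑ i ∈ S, ∑ j ∈ T i, w i j * X i j ω ∂μ = ∑ i ∈ S, ∑ j ∈ T i, w i j * c i j := by
  have hint (i) (hi : i ∈ S) (j) (hj : j ∈ T i) := (hX i hi j hj).1.const_mul (w i j)
  rw [integral_finsetSum _ fun i hi => integrable_finsetSum _ (hint i hi)]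
  refine sum_congr rfl fun i hi => ?_
  rw [integral_finsetSum _ (hint i hi)]
  refine sum_congr rfl fun j hj => ?_
  rw [integral_const_mul, (hX i hi j hj).2]

end

lemma tendsto_of_tendsto_two_mul {α : Type*} {f : ℕ → α} {l : Filter α}
    (h : Tendsto (fun n => f (2 * n)) atTop l) : Tendsto f (atTop ⊓ 𝓟 {N | Even N}) l := by
  have hhalf : Tendsto (· / 2) (atTop ⊓ 𝓟 {N : ℕ | Even N}) atTop :=
    (Nat.tendsto_div_const_atTop two_ne_zero).mono_left inf_le_left
  refine (h.comp hhalf).congr' ?_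
  rw [EventuallyEq, eventually_inf_principal]
  exact Eventually.of_forall fun N hN => by simp [Nat.two_mul_div_two_of_even hN]

lemma Real.sign_mul_self_eq_abs (x : ℝ) : Real.sign x * x = |x| := by
  rcases lt_trichotomy x 0 with hx | rfl | hx
  · simp [Real.sign_of_neg hx, abs_of_neg hx]
  · simp
  · simp [Real.sign_of_pos hx, abs_of_pos hx]

theorem expectation_diagonal_asymptotics_general
    (M : ℕ) (d : Fin M → ℕ) (hd : ∀ m, 2 ≤ d m)
    (α : Fin M → ℕ → ℝ) (hα : ∀ m r, r ≤ d m → 0 < α m r)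
    (ξ : ℝ)
    (hξdef : ξ = ∑ m, ((2 : ℝ) ^ (d m - 1))⁻¹ * ∑ r ∈ Finset.range (d m),
      ((d m - 1).choose r : ℝ) * ((d m : ℝ) - 1 - 2 * r) * α m r)
    (s : ℝ) (hs : s = Real.sign ξ)
    (Ω : ℕ → Type) (mΩ : ∀ N, MeasurableSpace (Ω N))
    (μ : ∀ N, Measure (Ω N))
    (Y : ∀ N, Fin M → ℕ → Ω N → ℕ)
    (hmeas : ∀ N m r, Measurable (Y N m r))
    (hdist : ∀ N : ℕ, Even N → ∀ m : Fin M, ∀ r < d m, ∀ k : ℕ,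
      μ N {ω | Y N m r ω = k}
        = ENNReal.ofReal
            ((((N / 2 - 1).choose (d m - 1 - r) * (N / 2).choose r).choose k : ℝ)
              * (min (α m r * Real.log N / (((N - 1).choose (d m - 1) : ℕ) : ℝ)) 1) ^ k
              * (1 - min (α m r * Real.log N / (((N - 1).choose (d m - 1) : ℕ) : ℝ)) 1)
                  ^ ((N / 2 - 1).choose (d m - 1 - r) * (N / 2).choose r - k))) :
    Tendsto
      (fun N : ℕ =>
        (∫ ω, s * ∑ m, ∑ r ∈ Finset.range (d m),
            ((d m : ℝ) - 1 - 2 * r) * (Y N m r ω : ℝ) ∂ (μ N)) / Real.log N)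
      (atTop ⊓ Filter.principal {N : ℕ | Even N})
      (nhds |ξ|) := by
  set p : ℕ → Fin M → ℕ → ℝ := fun N m r =>
    min (α m r * Real.log N / (((N - 1).choose (d m - 1) : ℕ) : ℝ)) 1
  set R : ℕ → Fin M → ℕ → ℕ := fun N m r => (N / 2 - 1).choose (d m - 1 - r) * (N / 2).choose r
  have hlaw (N : ℕ) (hN : Even N) (m : Fin M) (r : ℕ) (hr : r < d m) :
      HasLaw (Y N m r) Bin(R N m r,
        ⟨p N m r, le_min (by have := hα m r hr.le; positivity) zero_le_one, min_le_right _ _⟩)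
        (μ N) :=
    hasLaw_binomial_of_measure_eq (hmeas N m r) (hdist N hN m r hr)
  have hmean (N : ℕ) (hN : Even N) :
      ∫ ω, s * ∑ m, ∑ r ∈ range (d m), ((d m : ℝ) - 1 - 2 * r) * (Y N m r ω : ℝ) ∂(μ N)
        = s * ∑ m, ∑ r ∈ range (d m), ((d m : ℝ) - 1 - 2 * r) * (R N m r * p N m r) := by
    rw [integral_const_mul, integral_sum_sum_mul (X := fun m r ω => (Y N m r ω : ℝ))
      (c := fun m r => R N m r * p N m r) (fun m (r : ℕ) => (d m : ℝ) - 1 - 2 * r) fun m _ r hr =>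
      ⟨integrable_natCast_of_hasLaw_binomial (hlaw N hN m r (mem_range.1 hr)),
        integral_natCast_of_hasLaw_binomial (hlaw N hN m r (mem_range.1 hr))⟩]
  have hterm (m : Fin M) (r : ℕ) (hr : r ∈ range (d m)) :
      Tendsto (fun n : ℕ => ((d m : ℝ) - 1 - 2 * r) * (R (2 * n) m r * p (2 * n) m r)
          / Real.log (2 * n : ℕ))
        atTop (𝓝 (((d m : ℝ) - 1 - 2 * r) * (α m r * ((d m - 1).choose r / 2 ^ (d m - 1))))) := by
    refine ((tendsto_choose_mul_choose_mul_min_div_log (Nat.sub_pos_of_lt (hd m))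
      (Nat.le_sub_one_of_lt (mem_range.1 hr)) (α m r)).const_mul _).congr fun n => ?_
    simp only [R, p, Nat.mul_div_cancel_left n two_pos]
    push_cast
    ring
  have hlimit : ∑ m, ∑ r ∈ range (d m),
      ((d m : ℝ) - 1 - 2 * r) * (α m r * ((d m - 1).choose r / 2 ^ (d m - 1))) = ξ := by
    rw [hξdef]
    refine sum_congr rfl fun m _ => ?_
    rw [mul_sum]
    exact sum_congr rfl fun r _ => by ring
  apply tendsto_of_tendsto_two_mul
  rw [← Real.sign_mul_self_eq_abs, ← hs, ← hlimit]
  refine ((tendsto_finsetSum _ fun m _ => tendsto_finsetSum _ (hterm m)).const_mul s).congr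
    fun n => ?_
  rw [hmean (2 * n) (even_two_mul n), mul_div_assoc]
  simp only [sum_div]

/-- E[D_N] / log N → |ξ| along even N, where
D_N = s·Σ_m Σ_{r<d_m} (d_m−1−2r)·Y_{N,m,r}, the Y's being independent binomials
with parameters R_{N,m,r} = C(N/2−1, d_m−1−r)·C(N/2, r) and
p_{N,m,r} = min(α^{(m)}_r log N / C(N−1, d_m−1), 1), and s = sgn(ξ), ξ ≠ 0. -/
theorem expectation_diagonal_asymptotics
    (M : ℕ) (hM : 1 ≤ M) (d : Fin M → ℕ) (hd : ∀ m, 2 ≤ d m)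
    (α : Fin M → ℕ → ℝ) (hα : ∀ m r, r ≤ d m → 0 < α m r)
    (hsym : ∀ m r, r ≤ d m → α m r = α m (d m - r))
    (ξ : ℝ)
    (hξdef : ξ = ∑ m, ((2 : ℝ) ^ (d m - 1))⁻¹ * ∑ r ∈ Finset.range (d m),
      ((d m - 1).choose r : ℝ) * ((d m : ℝ) - 1 - 2 * r) * α m r)
    (hξ : ξ ≠ 0) (s : ℝ) (hs : s = Real.sign ξ)
    (Ω : ℕ → Type) (mΩ : ∀ N, MeasurableSpace (Ω N))
    (μ : ∀ N, Measure (Ω N)) (hprob : ∀ N, IsProbabilityMeasure (μ N))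
    (Y : ∀ N, Fin M → ℕ → Ω N → ℕ)
    (hmeas : ∀ N m r, Measurable (Y N m r))
    (hdist : ∀ N : ℕ, Even N → ∀ m : Fin M, ∀ r < d m, ∀ k : ℕ,
      μ N {ω | Y N m r ω = k}
        = ENNReal.ofReal
            ((((N / 2 - 1).choose (d m - 1 - r) * (N / 2).choose r).choose k : ℝ)
              * (min (α m r * Real.log N / (((N - 1).choose (d m - 1) : ℕ) : ℝ)) 1) ^ k
              * (1 - min (α m r * Real.log N / (((N - 1).choose (d m - 1) : ℕ) : ℝ)) 1)
                  ^ ((N / 2 - 1).choose (d m - 1 - r) * (N / 2).choose r - k)))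
    (hindep : ∀ N : ℕ, Even N →
      iIndepFun
        (fun q : {q : Fin M × ℕ // q.2 < d q.1} => Y N q.1.1 q.1.2) (μ N)) :
    Tendsto
      (fun N : ℕ =>
        (∫ ω, s * ∑ m, ∑ r ∈ Finset.range (d m),
            ((d m : ℝ) - 1 - 2 * r) * (Y N m r ω : ℝ) ∂ (μ N)) / Real.log N)
      (atTop ⊓ Filter.principal {N : ℕ | Even N})
      (nhds |ξ|) :=
  expectation_diagonal_asymptotics_general M d hd α hα ξ hξdef s hs Ω mΩ μ Y hmeas hdist
end
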